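/- Let s and t₀ > 0 be real numbers, and let A = (r_A, c_A, d_A) and B = (r_B, c_B, d_B) be triples of real numbers with c_A − s·r_A > 0 and c_B − s·r_B > 0. Suppose μ_{s,t₀}(A) = μ_{s,t₀}(B) and there exists ε > 0 such that μ_{s,t}(A) < μ_{s,t}(B) for all t with t₀ < t < t₀ + ε. Then r_A·c_B − r_B·c_A > 0. -/
import Mathlib


/-- The Bridgeland slope on ℙ² of a triple `(r, c, d)` of real numbers. -/
noncomputable def mu (s t r c d : ℝ) : ℝ :=
  (d - s * c + (s ^ 2 / 2) * r - (t ^ 2 / 2) * r) / (t * (c - s * r))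

/-- The numerical core of Lemma 5.1: if the slopes of `A` and `B` agree at `t₀` and
`A` has strictly smaller slope just above the wall, then
`ch₀(A) ch₁(B) - ch₀(B) ch₁(A) > 0`. -/
theorem destabilizing_positivity (s t₀ : ℝ) (ht₀ : 0 < t₀)
    (rA cA dA rB cB dB : ℝ)
    (hA : 0 < cA - s * rA) (hB : 0 < cB - s * rB)
    (heq : mu s t₀ rA cA dA = mu s t₀ rB cB dB)
    (hlt : ∃ ε > 0, ∀ t : ℝ, t₀ < t → t < t₀ + ε →
      mu s t rA cA dA < mu s t rB cB dB) :
    0 < rA * cB - rB * cA := by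
  obtain ⟨ε, hε, h⟩ := hlt
  set t : ℝ := t₀ + ε / 2 with ht
  have ht1 : t₀ < t := by simp [ht]; linarith
  have ht2 : t < t₀ + ε := by simp [ht]; linarith
  clear_value t
  have htpos : 0 < t := lt_trans ht₀ ht1
  have H := h t ht1 ht2
  unfold mu at heq H
  rw [div_eq_div_iff (mul_pos ht₀ hA).ne' (mul_pos ht₀ hB).ne'] at heq
  rw [div_lt_div_iff₀ (mul_pos htpos hA) (mul_pos htpos hB)] at H
  have E : (dA - s * cA + (s ^ 2 / 2) * rA - (t₀ ^ 2 / 2) * rA) * (cB - s * rB)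
      = (dB - s * cB + (s ^ 2 / 2) * rB - (t₀ ^ 2 / 2) * rB) * (cA - s * rA) := by
    have h2 : t₀ * ((dA - s * cA + (s ^ 2 / 2) * rA - (t₀ ^ 2 / 2) * rA) * (cB - s * rB))
        = t₀ * ((dB - s * cB + (s ^ 2 / 2) * rB - (t₀ ^ 2 / 2) * rB) * (cA - s * rA)) := by
      linarith [heq]
    exact mul_left_cancel₀ ht₀.ne' h2
  have I : (dA - s * cA + (s ^ 2 / 2) * rA - (t ^ 2 / 2) * rA) * (cB - s * rB)
      < (dB - s * cB + (s ^ 2 / 2) * rB - (t ^ 2 / 2) * rB) * (cA - s * rA) := by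
    have h2 : ((dA - s * cA + (s ^ 2 / 2) * rA - (t ^ 2 / 2) * rA) * (cB - s * rB)) * t
        < ((dB - s * cB + (s ^ 2 / 2) * rB - (t ^ 2 / 2) * rB) * (cA - s * rA)) * t := by
      linarith [H]
    exact lt_of_mul_lt_mul_right h2 htpos.le
  have htt : 0 < t ^ 2 - t₀ ^ 2 := by nlinarith
  have key : 0 < (t ^ 2 - t₀ ^ 2) * (rA * cB - rB * cA) := by nlinarith [E, I]
  nlinarith [key, htt]
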